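/- Let p > q ≥ 1 be coprime integers, and suppose p/q = [a_1,…,a_n] and p/(p−q) = [b_1,…,b_m] with all a_i ≥ 2, all b_j ≥ 2, and m ≥ 2. Then for every null sequence (n_1,…,n_m) of length m, one has (b_1 − n_1) + (b_2 − n_2) + ⋯ + (b_m − n_m) ≤ n + 1, with equality if and only if (n_1,…,n_m) = (1,2,…,2,1) (i.e. n_1 = n_m = 1 and n_i = 2 for 1 < i < m). -/

import Mathlib

/-!
Write `r = p/q` and `s = p/(p-q)`, so `(r - 1)(s - 1) = 1`. If `s < 2` then `b₁ = 2`, and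
dropping `b₁` while lowering `a₁` by one gives the same relation for `r - 1` and the tail of the
`b`'s; `r < 2` is symmetric and `r = s = 2` is `[2], [2]`. Induction gives Riemenschneider's
`Σ bⱼ = 2m + n - 1`. On the other side an interior blowup raises `Σ nᵢ - 2·length` by one and an
end blowup leaves it unchanged, so a null sequence of length `m` has `Σ nᵢ ≥ 2m - 2`, with
equality only if all blowups were end blowups, which produce `(1, 2, …, 2, 1)`.
-/

/-- `l'` is a strict blowup of `l`: either an interior blowup
`(n₁,…,n_{s−1}, n_s+1, 1, n_{s+1}+1, n_{s+2},…,n_k)` for some `1 ≤ s ≤ k−1`,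
or the end blowup `(n₁,…,n_{k−1}, n_k+1, 1)`. -/
def IsStrictBlowup (l l' : List ℤ) : Prop :=
  (∃ (A B : List ℤ) (a b : ℤ), l = A ++ a :: b :: B ∧
      l' = A ++ (a + 1) :: 1 :: (b + 1) :: B) ∨
  (∃ (A : List ℤ) (a : ℤ), l = A ++ [a] ∧ l' = A ++ [a + 1, 1])

/-- A null sequence is a finite integer sequence obtained from the one-term
sequence `(0)` by finitely many strict blowups. -/
def IsNullSeq (l : List ℤ) : Prop :=
  Relation.ReflTransGen IsStrictBlowup [0] l

/-- Hirzebruch–Jung continued fraction `[x₁,…,x_r] = x₁ − 1/(x₂ − 1/(⋯ − 1/x_r))`. -/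
def hjCF : List ℤ → ℚ
  | [] => 0
  | a :: l => (a : ℚ) - 1 / hjCF l

theorem hjCF_cons (x : ℤ) (l : List ℤ) : hjCF (x :: l) = x - 1 / hjCF l := rfl

theorem hjCF_singleton (x : ℤ) : hjCF [x] = x := by simp [hjCF]

theorem hjCF_cons_sub (x k : ℤ) (l : List ℤ) : hjCF ((x - k) :: l) = hjCF (x :: l) - k := by
  simp only [hjCF_cons]; push_cast; ring

theorem one_lt_hjCF {l : List ℤ} (hne : l ≠ []) (hl : ∀ x ∈ l, 2 ≤ x) : 1 < hjCF l := by
  induction l with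
  | nil => exact absurd rfl hne
  | cons x t ih =>
    have hx : (2 : ℚ) ≤ x := by exact_mod_cast hl x List.mem_cons_self
    rcases eq_or_ne t [] with rfl | ht
    · rw [hjCF_singleton]; linarith
    · have ht1 : 1 < hjCF t := ih ht fun y hy => hl y (List.mem_cons_of_mem _ hy)
      have : 1 / hjCF t < 1 := (div_lt_one (by linarith)).2 ht1
      rw [hjCF_cons]; linarith

/-- For `l = []` this is `1 / 0 = 0`, which is what makes `hjCF [x] = x`. -/
theorem one_div_hjCF_mem_Ico {l : List ℤ} (hl : ∀ x ∈ l, 2 ≤ x) : 1 / hjCF l ∈ Set.Ico 0 1 := by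
  rcases eq_or_ne l [] with rfl | hne
  · simp [hjCF]
  · have h1 := one_lt_hjCF hne hl
    exact ⟨by positivity, (div_lt_one (by linarith)).2 h1⟩

theorem hjCF_cons_le {x : ℤ} {l : List ℤ} (hl : ∀ y ∈ l, 2 ≤ y) : hjCF (x :: l) ≤ x := by
  rw [hjCF_cons]; linarith [(one_div_hjCF_mem_Ico hl).1]

theorem sub_one_lt_hjCF_cons {x : ℤ} {l : List ℤ} (hl : ∀ y ∈ l, 2 ≤ y) :
    (x : ℚ) - 1 < hjCF (x :: l) := by
  rw [hjCF_cons]; linarith [(one_div_hjCF_mem_Ico hl).2]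

theorem eq_two_of_hjCF_cons_lt_two {x : ℤ} {l : List ℤ} (hl : ∀ y ∈ x :: l, 2 ≤ y)
    (h : hjCF (x :: l) < 2) : x = 2 ∧ l ≠ [] := by
  have hl' : ∀ y ∈ l, 2 ≤ y := fun y hy => hl y (List.mem_cons_of_mem _ hy)
  have hx2 := hl x List.mem_cons_self
  have hx3 : (x : ℚ) < 3 := by linarith [sub_one_lt_hjCF_cons (x := x) hl']
  have hx : x < 3 := by exact_mod_cast hx3
  refine ⟨by omega, ?_⟩
  rintro rfl
  rw [hjCF_singleton] at h
  have : x < 2 := by exact_mod_cast h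
  omega

theorem eq_singleton_two_of_hjCF_eq_two {l : List ℤ} (hl : ∀ y ∈ l, 2 ≤ y) (h : hjCF l = 2) :
    l = [2] := by
  obtain ⟨x, t, rfl⟩ := List.exists_cons_of_ne_nil (l := l) (by rintro rfl; simp [hjCF] at h)
  have ht : ∀ y ∈ t, 2 ≤ y := fun y hy => hl y (List.mem_cons_of_mem _ hy)
  have hx : x = 2 := by
    have h3 : (x : ℚ) < 3 := by linarith [sub_one_lt_hjCF_cons (x := x) ht]
    have h2 : (2 : ℚ) ≤ x := by linarith [hjCF_cons_le (x := x) ht]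
    have : x < 3 := by exact_mod_cast h3
    have : 2 ≤ x := by exact_mod_cast h2
    omega
  subst hx
  rcases eq_or_ne t [] with rfl | hne
  · rfl
  · have ht1 := one_lt_hjCF hne ht
    have : 0 < 1 / hjCF t := by positivity
    rw [hjCF_cons] at h
    push_cast at h
    linarith

/-- `A` and `B` are the Hirzebruch–Jung expansions of `r` and `r / (r - 1)` for a rational
`r > 1`; the relation `(r - 1) (s - 1) = 1` is the symmetric form of `s = r / (r - 1)`. -/
structure IsHJDual (A B : List ℤ) : Prop where
  left_ne_nil : A ≠ []
  right_ne_nil : B ≠ []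
  two_le_left : ∀ x ∈ A, 2 ≤ x
  two_le_right : ∀ x ∈ B, 2 ≤ x
  mul_eq_one : (hjCF A - 1) * (hjCF B - 1) = 1

namespace IsHJDual

theorem symm {A B : List ℤ} (h : IsHJDual A B) : IsHJDual B A :=
  ⟨h.right_ne_nil, h.left_ne_nil, h.two_le_right, h.two_le_left, by rw [mul_comm]; exact h.mul_eq_one⟩

/-- Writing `s = 2 - 1 / t`, the relation `(r - 1) (s - 1) = 1` becomes `(r - 2) (t - 1) = 1`. -/
theorem cons_sub_one_of_hjCF_lt_two {a b : ℤ} {A' B' : List ℤ} (h : IsHJDual (a :: A') (b :: B'))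
    (hs : hjCF (b :: B') < 2) : b = 2 ∧ IsHJDual ((a - 1) :: A') B' := by
  obtain ⟨rfl, hB'⟩ := eq_two_of_hjCF_cons_lt_two h.two_le_right hs
  have hA' : ∀ y ∈ A', 2 ≤ y := fun y hy => h.two_le_left y (List.mem_cons_of_mem _ hy)
  have ht := one_lt_hjCF hB' fun y hy => h.two_le_right y (List.mem_cons_of_mem _ hy)
  have hmul := h.mul_eq_one
  rw [hjCF_cons (2 : ℤ)] at hs hmul
  push_cast at hs hmul
  have hr : 2 < hjCF (a :: A') := by
    have hu : 1 / hjCF B' < 1 := (div_lt_one (by linarith)).2 ht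
    by_contra! hr
    nlinarith [mul_nonneg (sub_nonneg.2 hr) (sub_nonneg.2 hu.le)]
  have ha : 2 < a := by exact_mod_cast hr.trans_le (hjCF_cons_le hA')
  refine ⟨rfl, ⟨List.cons_ne_nil _ _, hB', ?_, fun y hy =>
    h.two_le_right y (List.mem_cons_of_mem _ hy), ?_⟩⟩
  · rintro y (_ | ⟨_, hy⟩)
    · omega
    · exact hA' y hy
  · rw [hjCF_cons_sub]
    field_simp at hmul ⊢
    push_cast
    linarith

theorem sum_right {A B : List ℤ} (h : IsHJDual A B) : B.sum = 2 * B.length + A.length - 1 := by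
  obtain ⟨a, A', rfl⟩ := List.exists_cons_of_ne_nil h.left_ne_nil
  obtain ⟨b, B', rfl⟩ := List.exists_cons_of_ne_nil h.right_ne_nil
  rcases lt_trichotomy (hjCF (b :: B')) 2 with hs | hs | hs
  · obtain ⟨rfl, h'⟩ := h.cons_sub_one_of_hjCF_lt_two hs
    have := IsHJDual.sum_right h'
    simp only [List.sum_cons, List.length_cons] at this ⊢
    push_cast at this ⊢
    linarith
  · have hr : hjCF (a :: A') = 2 := by linarith [hs ▸ h.mul_eq_one]
    rw [eq_singleton_two_of_hjCF_eq_two h.two_le_right hs,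
      eq_singleton_two_of_hjCF_eq_two h.two_le_left hr]
    rfl
  · have hr : hjCF (a :: A') < 2 := by
      by_contra! hr
      nlinarith [h.mul_eq_one, mul_le_mul_of_nonneg_right (by linarith : (1 : ℚ) ≤ hjCF (a :: A') - 1)
        (by linarith : (0 : ℚ) ≤ hjCF (b :: B') - 1)]
    obtain ⟨rfl, h'⟩ := h.symm.cons_sub_one_of_hjCF_lt_two hr
    have := IsHJDual.sum_right h'.symm
    simp only [List.sum_cons, List.length_cons] at this ⊢
    push_cast at this ⊢
    linarith
termination_by A.length + B.length

end IsHJDual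

theorem IsStrictBlowup.sum_sub_two_mul_length_le {l l' : List ℤ} (h : IsStrictBlowup l l') :
    l.sum - 2 * l.length ≤ l'.sum - 2 * l'.length := by
  rcases h with ⟨A, B, x, y, rfl, rfl⟩ | ⟨A, x, rfl, rfl⟩ <;>
  · simp only [List.sum_append, List.sum_cons, List.length_append, List.length_cons]
    push_cast
    linarith

theorem IsNullSeq.two_mul_length_le {u : List ℤ} (hu : IsNullSeq u) :
    2 * (u.length : ℤ) ≤ u.sum + 2 := by
  induction hu with
  | refl => simp
  | tail _ hstep ih => linarith [hstep.sum_sub_two_mul_length_le]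

/-- Equality forces every blowup to be an end blowup, which only ever appends to `(0)`. -/
theorem IsNullSeq.eq_of_sum_add_two_eq {u : List ℤ} (hu : IsNullSeq u)
    (h : u.sum + 2 = 2 * u.length) : u = [0] ∨ ∃ k, u = 1 :: (List.replicate k 2 ++ [1]) := by
  induction hu with
  | refl => exact Or.inl rfl
  | tail hl hstep ih =>
    rcases hstep with ⟨A, B, x, y, rfl, rfl⟩ | ⟨A, x, rfl, rfl⟩
    · have := IsNullSeq.two_mul_length_le hl
      simp only [List.sum_append, List.sum_cons, List.length_append, List.length_cons] at h this
      push_cast at h this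
      linarith
    · right
      have h' : (A ++ [x]).sum + 2 = 2 * (A ++ [x]).length := by
        simp only [List.sum_append, List.sum_cons, List.length_append, List.length_cons] at h ⊢
        push_cast at h ⊢
        linarith
      rcases ih h' with h0 | ⟨k, hk⟩
      · obtain ⟨rfl, rfl⟩ : A = [] ∧ x = 0 := by simpa [List.append_eq_singleton_iff] using h0
        exact ⟨0, rfl⟩
      · rw [← List.cons_append] at hk
        obtain ⟨rfl, hx⟩ := List.append_inj' hk rfl
        obtain rfl : x = 1 := by simpa using hx
        exact ⟨k + 1, by simp [List.replicate_succ']⟩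

theorem stmt7_general (p q : ℕ) (hq : 1 ≤ q) (hqp : q < p)
    (n m : ℕ) (hn : 1 ≤ n) (hm : 2 ≤ m)
    (a b : ℕ → ℤ) (ha : ∀ i < n, 2 ≤ a i) (hb : ∀ i < m, 2 ≤ b i)
    (hav : (p : ℚ) / q = hjCF ((List.range n).map fun i => a i))
    (hbv : (p : ℚ) / ((p : ℚ) - q) = hjCF ((List.range m).map fun i => b i))
    (u : List ℤ) (hu : IsNullSeq u) (hul : u.length = m) :
    ((List.range m).map fun i => b i).sum - u.sum ≤ (n : ℤ) + 1 ∧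
      (((List.range m).map fun i => b i).sum - u.sum = (n : ℤ) + 1 ↔
        u = 1 :: (List.replicate (m - 2) (2 : ℤ) ++ [1])) := by
  have hdual : IsHJDual ((List.range n).map fun i => a i) ((List.range m).map fun i => b i) := by
    refine ⟨List.ne_nil_of_length_pos (by simp only [List.length_map, List.length_range]; omega),
      List.ne_nil_of_length_pos (by simp only [List.length_map, List.length_range]; omega), by simpa using ha, by simpa using hb, ?_⟩
    have hq0 : (q : ℚ) ≠ 0 := by positivity
    have hpq : (p : ℚ) - q ≠ 0 := sub_ne_zero.2 (by exact_mod_cast hqp.ne')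
    rw [← hav, ← hbv]
    field_simp
    ring
  have hbsum := hdual.sum_right
  simp only [List.length_map, List.length_range] at hbsum
  have hle := hu.two_mul_length_le
  rw [hul] at hle
  refine ⟨by linarith, fun h => ?_, fun h => ?_⟩
  · rcases hu.eq_of_sum_add_two_eq (by rw [hul]; linarith) with rfl | ⟨k, rfl⟩
    · simp only [List.length_singleton] at hul
      omega
    · obtain rfl : k = m - 2 := by simp only [List.length_cons, List.length_append,
        List.length_replicate, List.length_nil] at hul; omega
      rfl
  · have hsum : u.sum = 2 * m - 2 := by
      simp only [h, List.sum_cons, List.sum_append, List.sum_replicate, nsmul_eq_mul,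
        List.sum_nil]
      push_cast [Nat.cast_sub hm]
      ring
    linarith

theorem stmt7 (p q : ℕ) (hq : 1 ≤ q) (hqp : q < p) (hpq : Nat.Coprime p q)
    (n m : ℕ) (hn : 1 ≤ n) (hm : 2 ≤ m)
    (a b : ℕ → ℤ) (ha : ∀ i < n, 2 ≤ a i) (hb : ∀ i < m, 2 ≤ b i)
    (hav : (p : ℚ) / q = hjCF ((List.range n).map fun i => a i))
    (hbv : (p : ℚ) / ((p : ℚ) - q) = hjCF ((List.range m).map fun i => b i))
    (u : List ℤ) (hu : IsNullSeq u) (hul : u.length = m) :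
    ((List.range m).map fun i => b i).sum - u.sum ≤ (n : ℤ) + 1 ∧
      (((List.range m).map fun i => b i).sum - u.sum = (n : ℤ) + 1 ↔
        u = 1 :: (List.replicate (m - 2) (2 : ℤ) ++ [1])) :=
  stmt7_general p q hq hqp n m hn hm a b ha hb hav hbv u hu hul
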